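/- arXiv:1601.03353 — 2 statements merged into one kernel-verified Lean document; each statement's English description precedes it below -/
import Mathlib

section
/- Let φ ∈ A(𝔻) be a symbol mapping 𝔻̄ into 𝔻̄ whose iterates φ^n converge to a point z₀ ∈ ∂𝔻 uniformly on the compact subsets of 𝔻 (z₀ is the Denjoy–Wolff point), and suppose φ extends holomorphically to a neighborhood of z₀ with φ(z₀) = z₀ and |φ'(z₀)| < 1 (φ is hyperbolic and holomorphic near z₀). Then the composition operator C_φ : A(𝔻) → A(𝔻) is mean ergodic if and only if lim_{n→∞} φ^n(z) = z₀ for every z ∈ 𝔻̄. -/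
open Metric Set Filter Complex
open scoped Topology Classical

noncomputable section

/-- Membership in the disc algebra `A(𝔻)`: continuous on the closed unit disc and
holomorphic on the open unit disc. -/
def IsDiscAlg (f : ℂ → ℂ) : Prop :=
  ContinuousOn f (closedBall (0:ℂ) 1) ∧ DifferentiableOn ℂ f (ball (0:ℂ) 1)

/-- Membership in `H^∞(𝔻)`: bounded and holomorphic on the open unit disc. -/
def IsHInf (f : ℂ → ℂ) : Prop :=
  DifferentiableOn ℂ f (ball (0:ℂ) 1) ∧ ∃ M : ℝ, ∀ z ∈ ball (0:ℂ) 1, ‖f z‖ ≤ M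

/-- The Cesàro means `(C_φ)_[n] f = (1/n) ∑_{m=1}^n f ∘ φ^m` of the composition
operator `C_φ f = f ∘ φ`. -/
def cesaro (φ f : ℂ → ℂ) (n : ℕ) (z : ℂ) : ℂ :=
  (n : ℂ)⁻¹ * ∑ m ∈ Finset.Icc 1 n, f (φ^[m] z)

/-- `C_φ` is mean ergodic on `A(𝔻)`: for each `f ∈ A(𝔻)` the Cesàro means converge
in the sup norm on the closed disc. -/
def MeanErgodicDiscAlg (φ : ℂ → ℂ) : Prop :=
  ∀ f : ℂ → ℂ, IsDiscAlg f →
    ∃ g : ℂ → ℂ, TendstoUniformlyOn (cesaro φ f) g atTop (closedBall (0:ℂ) 1)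

/-- `C_φ` is uniformly mean ergodic on `A(𝔻)`: the Cesàro means converge in operator
norm, i.e. uniformly over the unit ball of `A(𝔻)`. -/
def UnifMeanErgodicDiscAlg (φ : ℂ → ℂ) : Prop :=
  ∃ P : (ℂ → ℂ) → ℂ → ℂ, ∀ ε > (0:ℝ), ∃ N : ℕ, ∀ n ≥ N,
    ∀ f : ℂ → ℂ, IsDiscAlg f → (∀ z ∈ closedBall (0:ℂ) 1, ‖f z‖ ≤ 1) →
      ∀ z ∈ closedBall (0:ℂ) 1, ‖cesaro φ f n z - P f z‖ ≤ ε

/-- `C_φ` is mean ergodic on `H^∞(𝔻)`: for each `f ∈ H^∞(𝔻)` the Cesàro means converge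
in the sup norm on the open disc. -/
def MeanErgodicHInf (φ : ℂ → ℂ) : Prop :=
  ∀ f : ℂ → ℂ, IsHInf f →
    ∃ g : ℂ → ℂ, TendstoUniformlyOn (cesaro φ f) g atTop (ball (0:ℂ) 1)

/-- `C_φ` is uniformly mean ergodic on `H^∞(𝔻)`: the Cesàro means converge in operator
norm, i.e. uniformly over the unit ball of `H^∞(𝔻)`. -/
def UnifMeanErgodicHInf (φ : ℂ → ℂ) : Prop :=
  ∃ P : (ℂ → ℂ) → ℂ → ℂ, ∀ ε > (0:ℝ), ∃ N : ℕ, ∀ n ≥ N,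
    ∀ f : ℂ → ℂ, IsHInf f → (∀ z ∈ ball (0:ℂ) 1, ‖f z‖ ≤ 1) →
      ∀ z ∈ ball (0:ℂ) 1, ‖cesaro φ f n z - P f z‖ ≤ ε

/-- `φ` is an automorphism (biholomorphic self-map) of the open unit disc. -/
def IsDiscAutomorphism (φ : ℂ → ℂ) : Prop :=
  DifferentiableOn ℂ φ (ball (0:ℂ) 1) ∧ MapsTo φ (ball (0:ℂ) 1) (ball (0:ℂ) 1) ∧
  ∃ ψ : ℂ → ℂ, DifferentiableOn ℂ ψ (ball (0:ℂ) 1) ∧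
    MapsTo ψ (ball (0:ℂ) 1) (ball (0:ℂ) 1) ∧
    (∀ z ∈ ball (0:ℂ) 1, ψ (φ z) = z) ∧ ∀ z ∈ ball (0:ℂ) 1, φ (ψ z) = z

/-- An elliptic automorphism of the disc: an automorphism with a fixed point in `𝔻`. -/
def IsEllipticAutomorphism (φ : ℂ → ℂ) : Prop :=
  IsDiscAutomorphism φ ∧ ∃ z ∈ ball (0:ℂ) 1, φ z = z

/-- A hyperbolic automorphism of the disc: an automorphism with exactly two fixed
points, both on the unit circle. -/
def IsHyperbolicAutomorphism (φ : ℂ → ℂ) : Prop :=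
  IsDiscAutomorphism φ ∧ ∃ p q : ℂ, p ≠ q ∧ ‖p‖ = 1 ∧ ‖q‖ = 1 ∧ φ p = p ∧ φ q = q ∧
    ∀ z ∈ closedBall (0:ℂ) 1, φ z = z → z = p ∨ z = q

/-- A parabolic automorphism of the disc: an automorphism with exactly one fixed
point, lying on the unit circle. -/
def IsParabolicAutomorphism (φ : ℂ → ℂ) : Prop :=
  IsDiscAutomorphism φ ∧ ∃ p : ℂ, ‖p‖ = 1 ∧ φ p = p ∧
    ∀ z ∈ closedBall (0:ℂ) 1, φ z = z → z = p

/-- A set `J ⊆ ℕ` has density one: `#(J ∩ [0,N]) / N → 1` as `N → ∞`. -/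
def HasDensityOne (J : Set ℕ) : Prop :=
  Tendsto (fun N : ℕ => (((Finset.range (N + 1)).filter (fun n => n ∈ J)).card : ℝ) / N)
    atTop (𝓝 1)

/-- A typical weight on `𝔻`: continuous, strictly positive, bounded, radial,
non-increasing in `|z|`, and tending to `0` as `|z| → 1`. -/
def IsTypicalWeight (v : ℂ → ℝ) : Prop :=
  ContinuousOn v (ball (0:ℂ) 1) ∧ (∀ z ∈ ball (0:ℂ) 1, 0 < v z) ∧
  (∃ M : ℝ, ∀ z ∈ ball (0:ℂ) 1, v z ≤ M) ∧
  (∀ z ∈ ball (0:ℂ) 1, ∀ w ∈ ball (0:ℂ) 1, ‖z‖ = ‖w‖ → v z = v w) ∧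
  (∀ z ∈ ball (0:ℂ) 1, ∀ w ∈ ball (0:ℂ) 1, ‖z‖ ≤ ‖w‖ → v w ≤ v z) ∧
  (∀ ε > (0:ℝ), ∃ r : ℝ, r < 1 ∧ ∀ z ∈ ball (0:ℂ) 1, r ≤ ‖z‖ → v z < ε)

/-- Membership in the weighted space `H_v^∞`. -/
def IsHvInf (v : ℂ → ℝ) (f : ℂ → ℂ) : Prop :=
  DifferentiableOn ℂ f (ball (0:ℂ) 1) ∧ ∃ M : ℝ, ∀ z ∈ ball (0:ℂ) 1, v z * ‖f z‖ ≤ M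

/-- Membership in the weighted space `H_v^0`. -/
def IsHv0 (v : ℂ → ℝ) (f : ℂ → ℂ) : Prop :=
  IsHvInf v f ∧
  ∀ ε > (0:ℝ), ∃ r : ℝ, r < 1 ∧ ∀ z ∈ ball (0:ℂ) 1, r ≤ ‖z‖ → v z * ‖f z‖ < ε

/-!
Since `|φ'(z₀)| < 1`, near `z₀` the symbol does not increase the distance to `z₀`, so every small
disc around `z₀` is forward invariant under `φ` on `𝔻̄`.

If `C_φ` is mean ergodic, the uniform limit of the Cesàro means of the identity is continuous on
`𝔻̄` and equals `z₀` on `𝔻` by the Denjoy–Wolff hypothesis, hence on `𝔻̄`. As `z₀` is an exposed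
point of `𝔻̄`, averages of points of `𝔻̄` can only tend to `z₀` if the points come arbitrarily
close to `z₀`; invariance of small discs then forces `φⁿ(z) → z₀`.

Conversely, pointwise convergence on the compact set `𝔻̄` together with the invariance of small
discs gives uniform convergence `φⁿ → z₀` on `𝔻̄`, hence `f ∘ φⁿ → f(z₀)` uniformly for each
`f ∈ A(𝔻)`, and so do the Cesàro means.
-/

open scoped InnerProductSpace

theorem HasDerivAt.eventually_dist_le {𝕜 : Type*} [NontriviallyNormedField 𝕜] {ψ : 𝕜 → 𝕜}
    {ψ' a : 𝕜} {c : ℝ} (h : HasDerivAt ψ ψ' a) (hc : ‖ψ'‖ < c) :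
    ∀ᶠ w in 𝓝 a, dist (ψ w) (ψ a) ≤ c * dist w a := by
  filter_upwards [(hasDerivAt_iff_isLittleO.mp h).def (sub_pos.2 hc)] with w hw
  rw [dist_eq_norm, dist_eq_norm]
  calc ‖ψ w - ψ a‖ = ‖(ψ w - ψ a - (w - a) • ψ') + (w - a) • ψ'‖ := by rw [sub_add_cancel]
    _ ≤ ‖ψ w - ψ a - (w - a) • ψ'‖ + ‖(w - a) • ψ'‖ := norm_add_le _ _
    _ ≤ (c - ‖ψ'‖) * ‖w - a‖ + ‖w - a‖ * ‖ψ'‖ := add_le_add hw (norm_smul _ _).le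
    _ = c * ‖w - a‖ := by ring

theorem exists_forall_dist_le_of_norm_deriv_lt_one {𝕜 : Type*} [NontriviallyNormedField 𝕜]
    {φ ψ : 𝕜 → 𝕜} {s : Set 𝕜} {z₀ : 𝕜} {r : ℝ} (hr : 0 < r)
    (hψ : DifferentiableOn 𝕜 ψ (ball z₀ r)) (hψφ : EqOn ψ φ (ball z₀ r ∩ s)) (hfix : ψ z₀ = z₀)
    (hder : ‖deriv ψ z₀‖ < 1) :
    ∃ δ > 0, ∀ w ∈ s, dist w z₀ < δ → dist (φ w) z₀ ≤ dist w z₀ := by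
  have hderiv := (hψ.differentiableAt (ball_mem_nhds z₀ hr)).hasDerivAt
  obtain ⟨δ, hδ, hnear⟩ := Metric.eventually_nhds_iff.1
    ((hderiv.eventually_dist_le hder).and (ball_mem_nhds z₀ hr))
  refine ⟨δ, hδ, fun w hw hwδ => ?_⟩
  obtain ⟨hle, hwr⟩ := hnear hwδ
  rw [one_mul, hfix] at hle
  rwa [← hψφ ⟨hwr, hw⟩]

section Dynamics

variable {X : Type*} [PseudoMetricSpace X] {f : X → X} {s : Set X} {p : X} {δ ε : ℝ}

theorem mapsTo_inter_ball_of_dist_le (hfs : MapsTo f s s)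
    (hf : ∀ x ∈ s, dist x p < δ → dist (f x) p ≤ dist x p) (hε : ε ≤ δ) :
    MapsTo f (s ∩ ball p ε) (s ∩ ball p ε) :=
  fun x ⟨hx, hxε⟩ => ⟨hfs hx, (hf x hx (lt_of_lt_of_le hxε hε)).trans_lt hxε⟩

theorem iterate_mem_ball_of_le (hfs : MapsTo f s s)
    (hf : ∀ x ∈ s, dist x p < δ → dist (f x) p ≤ dist x p) (hε : ε ≤ δ) {x : X} (hx : x ∈ s)
    {k n : ℕ} (hk : f^[k] x ∈ ball p ε) (hkn : k ≤ n) : f^[n] x ∈ ball p ε := by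
  obtain ⟨j, rfl⟩ := Nat.exists_eq_add_of_le hkn
  rw [add_comm, Function.iterate_add_apply]
  exact ((mapsTo_inter_ball_of_dist_le hfs hf hε).iterate j ⟨hfs.iterate k hx, hk⟩).2

theorem tendsto_iterate_of_forall_exists_mem_ball (hfs : MapsTo f s s) (hδ : 0 < δ)
    (hf : ∀ x ∈ s, dist x p < δ → dist (f x) p ≤ dist x p) {x : X} (hx : x ∈ s)
    (h : ∀ ε > 0, ∃ k, f^[k] x ∈ ball p ε) : Tendsto (fun n => f^[n] x) atTop (𝓝 p) := by
  refine Metric.tendsto_atTop.2 fun ε hε => ?_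
  obtain ⟨k, hk⟩ := h (min ε δ) (lt_min hε hδ)
  exact ⟨k, fun n hn => (iterate_mem_ball_of_le hfs hf (min_le_right ε δ) hx hk hn).trans_le
    (min_le_left ε δ)⟩

theorem eventually_mapsTo_iterate_ball (hs : IsCompact s) (hfs : MapsTo f s s)
    (hfc : ContinuousOn f s) (hf : ∀ x ∈ s, dist x p < δ → dist (f x) p ≤ dist x p)
    (hε : ε ≤ δ) (h : ∀ x ∈ s, ∃ k, f^[k] x ∈ ball p ε) :
    ∀ᶠ n in atTop, MapsTo (f^[n]) s (ball p ε) := by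
  refine hs.induction_on (p := fun t => ∀ᶠ n in atTop, MapsTo (f^[n]) t (ball p ε))
    (.of_forall fun _ => mapsTo_empty _ _) (fun t₁ t₂ h₁₂ h => h.mono fun _ hn => hn.mono_left h₁₂)
    (fun t₁ t₂ h₁ h₂ => (h₁.and h₂).mono fun _ hn => hn.1.union hn.2) fun x hx => ?_
  obtain ⟨k, hk⟩ := h x hx
  refine ⟨s ∩ f^[k] ⁻¹' ball p ε, inter_mem self_mem_nhdsWithin
    ((hfc.iterate hfs k x hx).preimage_mem_nhdsWithin (isOpen_ball.mem_nhds hk)),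
    eventually_atTop.2 ⟨k, fun n hn y hy => iterate_mem_ball_of_le hfs hf hε hy.1 hy.2 hn⟩⟩

theorem tendstoUniformlyOn_iterate (hs : IsCompact s) (hfs : MapsTo f s s)
    (hfc : ContinuousOn f s) (hδ : 0 < δ) (hf : ∀ x ∈ s, dist x p < δ → dist (f x) p ≤ dist x p)
    (h : ∀ x ∈ s, Tendsto (fun n => f^[n] x) atTop (𝓝 p)) :
    TendstoUniformlyOn (fun n => f^[n]) (fun _ => p) atTop s := by
  refine Metric.tendstoUniformlyOn_iff.2 fun ε hε => ?_
  have hεδ := lt_min hε hδ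
  filter_upwards [eventually_mapsTo_iterate_ball hs hfs hfc hf (min_le_right ε δ)
    fun x hx => ((h x hx).eventually (ball_mem_nhds p hεδ)).exists] with n hn x hx
  exact dist_comm p _ ▸ (mem_ball.1 (hn hx)).trans_le (min_le_left ε δ)

end Dynamics

theorem ContinuousWithinAt.comp_tendstoUniformlyOn_const {ι α Y Z : Type*} [PseudoMetricSpace Y]
    [PseudoMetricSpace Z] {l : Filter ι} {F : ι → α → Y} {s : Set α} {t : Set Y} {y : Y}
    {f : Y → Z} (hf : ContinuousWithinAt f t y) (hF : TendstoUniformlyOn F (fun _ => y) l s)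
    (hFt : ∀ i, MapsTo (F i) s t) :
    TendstoUniformlyOn (fun i x => f (F i x)) (fun _ => f y) l s := by
  rw [Metric.tendstoUniformlyOn_iff] at hF ⊢
  intro ε hε
  obtain ⟨ρ, hρ, hfρ⟩ := Metric.continuousWithinAt_iff.1 hf ε hε
  filter_upwards [hF ρ hρ] with i hi x hx
  have hFi := hi x hx
  rw [dist_comm] at hFi ⊢
  exact hfρ (hFt i hx) hFi

theorem TendstoUniformlyOn.cesaro_smul {α E : Type*} [NormedAddCommGroup E] [NormedSpace ℝ E]
    {F : ℕ → α → E} {g : α → E} {s : Set α} (h : TendstoUniformlyOn F g atTop s)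
    (hb : ∃ B, ∀ m, ∀ x ∈ s, ‖F m x - g x‖ ≤ B) :
    TendstoUniformlyOn (fun (n : ℕ) x => (n⁻¹ : ℝ) • ∑ m ∈ Finset.range n, F m x) g atTop s := by
  obtain ⟨B, hB⟩ := hb
  set d : ℕ → ℝ := fun m => ⨆ x : s, ‖F m x - g x‖
  have hFd : ∀ m, ∀ x ∈ s, ‖F m x - g x‖ ≤ d m := fun m x hx =>
    le_ciSup (f := fun x : s => ‖F m x - g x‖) ⟨B, by rintro _ ⟨y, rfl⟩; exact hB m y y.2⟩ ⟨x, hx⟩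
  have hd : Tendsto d atTop (𝓝 0) := by
    refine Metric.tendsto_nhds.2 fun ε hε => ?_
    filter_upwards [Metric.tendstoUniformlyOn_iff.1 h (ε / 2) (half_pos hε)] with m hm
    have hsup : d m ≤ ε / 2 := Real.iSup_le (fun x => by
      rw [← dist_eq_norm, dist_comm]; exact (hm x x.2).le) (half_pos hε).le
    rw [Real.dist_0_eq_abs, abs_of_nonneg (Real.iSup_nonneg fun _ => norm_nonneg _)]
    linarith
  refine Metric.tendstoUniformlyOn_iff.2 fun ε hε => ?_
  filter_upwards [Metric.tendsto_nhds.1 hd.cesaro ε hε, eventually_ge_atTop 1] with n hn hn1 x hx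
  have hn' : (n : ℝ) ≠ 0 := Nat.cast_ne_zero.2 (by omega)
  rw [Real.dist_0_eq_abs] at hn
  calc dist (g x) ((n⁻¹ : ℝ) • ∑ m ∈ Finset.range n, F m x)
      = ‖(n⁻¹ : ℝ) • ∑ m ∈ Finset.range n, (F m x - g x)‖ := by
        rw [dist_comm, dist_eq_norm, Finset.sum_sub_distrib, Finset.sum_const, Finset.card_range,
          smul_sub, ← Nat.cast_smul_eq_nsmul ℝ, smul_smul, inv_mul_cancel₀ hn', one_smul]
    _ ≤ (n⁻¹ : ℝ) * ∑ m ∈ Finset.range n, d m := by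
        rw [norm_smul, Real.norm_of_nonneg (by positivity)]
        gcongr
        exact (norm_sum_le _ _).trans (Finset.sum_le_sum fun m _ => hFd m x hx)
    _ < ε := (le_abs_self _).trans_lt hn

theorem exists_dist_lt_of_tendsto_cesaro_smul {E : Type*} [NormedAddCommGroup E]
    [InnerProductSpace ℝ E] {u : ℕ → E} {z₀ : E} (hu : ∀ m, ‖u m‖ ≤ 1) (hz₀ : ‖z₀‖ = 1)
    (h : Tendsto (fun n : ℕ => (n⁻¹ : ℝ) • ∑ m ∈ Finset.range n, u m) atTop (𝓝 z₀))
    {ε : ℝ} (hε : 0 < ε) : ∃ m, dist (u m) z₀ < ε := by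
  by_contra! hfar
  have hinner : ∀ m, ⟪u m, z₀⟫_ℝ ≤ 1 - ε ^ 2 / 2 := fun m => by
    have hd := hfar m
    rw [dist_eq_norm] at hd
    nlinarith [norm_sub_sq_real (u m) z₀, hu m, norm_nonneg (u m)]
  have hmean : ∀ n : ℕ, 1 ≤ n →
      ⟪(n⁻¹ : ℝ) • ∑ m ∈ Finset.range n, u m, z₀⟫_ℝ ≤ 1 - ε ^ 2 / 2 := by
    intro n hn
    have hn' : (0 : ℝ) < n := Nat.cast_pos.2 hn
    rw [real_inner_smul_left, sum_inner, inv_mul_le_iff₀ hn']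
    simpa using Finset.sum_le_card_nsmul (Finset.range n) _ _ fun m _ => hinner m
  have hlim : ⟪z₀, z₀⟫_ℝ ≤ 1 - ε ^ 2 / 2 :=
    le_of_tendsto (h.inner tendsto_const_nhds) (eventually_atTop.2 ⟨1, hmean⟩)
  rw [real_inner_self_eq_norm_sq, hz₀] at hlim
  nlinarith

theorem cesaro_eq_smul (φ f : ℂ → ℂ) :
    cesaro φ f = fun (n : ℕ) z => (n⁻¹ : ℝ) • ∑ m ∈ Finset.range n, f (φ^[m + 1] z) := by
  funext n z
  rw [cesaro, Complex.real_smul, Finset.range_eq_Ico,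
    Finset.sum_Ico_add' (fun m => f (φ^[m] z)), zero_add, Finset.Ico_add_one_right_eq_Icc]
  push_cast
  rfl

theorem tendsto_cesaro_apply {φ f : ℂ → ℂ} {z L : ℂ}
    (h : Tendsto (fun n => f (φ^[n] z)) atTop (𝓝 L)) :
    Tendsto (fun n => cesaro φ f n z) atTop (𝓝 L) := by
  simp_rw [cesaro_eq_smul]
  exact ((tendsto_add_atTop_iff_nat 1).2 h).cesaro_smul

theorem continuousOn_cesaro {φ f : ℂ → ℂ} {s : Set ℂ} (hf : ContinuousOn f s)
    (hφ : ContinuousOn φ s) (hφs : MapsTo φ s s) (n : ℕ) : ContinuousOn (cesaro φ f n) s :=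
  continuousOn_const.mul <| continuousOn_finsetSum _ fun m _ =>
    hf.comp (hφ.iterate hφs m) (hφs.iterate m)

theorem tendsto_iterate_of_meanErgodicDiscAlg {φ : ℂ → ℂ} {z₀ : ℂ} {δ : ℝ}
    (hφc : ContinuousOn φ (closedBall 0 1)) (hφm : MapsTo φ (closedBall 0 1) (closedBall 0 1))
    (hz₀ : ‖z₀‖ = 1) (hDW : ∀ w ∈ ball (0 : ℂ) 1, Tendsto (fun n => φ^[n] w) atTop (𝓝 z₀))
    (hδ : 0 < δ) (hφz₀ : ∀ w ∈ closedBall (0 : ℂ) 1, dist w z₀ < δ → dist (φ w) z₀ ≤ dist w z₀)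
    (hme : MeanErgodicDiscAlg φ) {z : ℂ} (hz : z ∈ closedBall (0 : ℂ) 1) :
    Tendsto (fun n => φ^[n] z) atTop (𝓝 z₀) := by
  obtain ⟨g, hg⟩ := hme id ⟨continuousOn_id, differentiableOn_id⟩
  have hg_ball : EqOn g (fun _ => z₀) (ball 0 1) := fun w hw =>
    tendsto_nhds_unique (hg.tendsto_at (ball_subset_closedBall hw))
      (tendsto_cesaro_apply (hDW w hw))
  have hg_closedBall : EqOn g (fun _ => z₀) (closedBall 0 1) :=
    hg_ball.of_subset_closure
      (hg.continuousOn (.of_forall (continuousOn_cesaro continuousOn_id hφc hφm)))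
      continuousOn_const ball_subset_closedBall (closure_ball 0 one_ne_zero).ge
  have hcesaro := hg.tendsto_at hz
  simp_rw [hg_closedBall hz, cesaro_eq_smul] at hcesaro
  refine tendsto_iterate_of_forall_exists_mem_ball hφm hδ hφz₀ hz fun ε hε => ?_
  obtain ⟨m, hm⟩ := exists_dist_lt_of_tendsto_cesaro_smul
    (fun m => mem_closedBall_zero_iff.1 (hφm.iterate (m + 1) hz)) hz₀ hcesaro hε
  exact ⟨m + 1, hm⟩

theorem meanErgodicDiscAlg_of_tendsto_iterate {φ : ℂ → ℂ} {z₀ : ℂ} {δ : ℝ}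
    (hφc : ContinuousOn φ (closedBall 0 1)) (hφm : MapsTo φ (closedBall 0 1) (closedBall 0 1))
    (hz₀ : ‖z₀‖ = 1) (hδ : 0 < δ)
    (hφz₀ : ∀ w ∈ closedBall (0 : ℂ) 1, dist w z₀ < δ → dist (φ w) z₀ ≤ dist w z₀)
    (h : ∀ z ∈ closedBall (0 : ℂ) 1, Tendsto (fun n => φ^[n] z) atTop (𝓝 z₀)) :
    MeanErgodicDiscAlg φ := by
  intro f hf
  have hK : IsCompact (closedBall (0 : ℂ) 1) := isCompact_closedBall 0 1
  have hz₀K : z₀ ∈ closedBall (0 : ℂ) 1 := mem_closedBall_zero_iff.2 hz₀.le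
  have hiter : TendstoUniformlyOn (fun n x => φ^[n + 1] x) (fun _ => z₀) atTop
      (closedBall 0 1) :=
    ((tendstoUniformlyOn_iterate hK hφm hφc hδ hφz₀ h).comp φ).mono hφm
  have hf_iter := (hf.1 z₀ hz₀K).comp_tendstoUniformlyOn_const hiter fun n => hφm.iterate (n + 1)
  obtain ⟨B, hB⟩ := hK.exists_bound_of_continuousOn hf.1
  refine ⟨fun _ => f z₀, ?_⟩
  simp_rw [cesaro_eq_smul]
  exact hf_iter.cesaro_smul ⟨B + B, fun m x hx => (norm_sub_le _ _).trans
    (add_le_add (hB _ (hφm.iterate (m + 1) hx)) (hB z₀ hz₀K))⟩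

theorem stmt_12_general (φ : ℂ → ℂ) (hφa : IsDiscAlg φ)
    (hφm : MapsTo φ (closedBall (0:ℂ) 1) (closedBall (0:ℂ) 1))
    (z₀ : ℂ) (hz₀ : ‖z₀‖ = 1)
    (hDW : TendstoLocallyUniformlyOn (fun (n : ℕ) (z : ℂ) => φ^[n] z) (fun _ => z₀)
      atTop (ball (0:ℂ) 1))
    (hext : ∃ r > (0:ℝ), ∃ ψ : ℂ → ℂ, DifferentiableOn ℂ ψ (ball z₀ r) ∧
      EqOn ψ φ (ball z₀ r ∩ closedBall (0:ℂ) 1) ∧ ψ z₀ = z₀ ∧ ‖deriv ψ z₀‖ < 1) :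
    MeanErgodicDiscAlg φ ↔
      ∀ z ∈ closedBall (0:ℂ) 1, Tendsto (fun n : ℕ => φ^[n] z) atTop (𝓝 z₀) := by
  obtain ⟨r, hr, ψ, hψ, hψφ, hψz₀, hψ'⟩ := hext
  obtain ⟨δ, hδ, hφz₀⟩ := exists_forall_dist_le_of_norm_deriv_lt_one hr hψ hψφ hψz₀ hψ'
  exact ⟨fun hme z hz => tendsto_iterate_of_meanErgodicDiscAlg hφa.1 hφm hz₀
      (fun w hw => hDW.tendsto_at hw) hδ hφz₀ hme hz,
    meanErgodicDiscAlg_of_tendsto_iterate hφa.1 hφm hz₀ hδ hφz₀⟩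

/-- **Hyperbolic symbol, holomorphic near the Denjoy–Wolff point.** Let `φ ∈ A(𝔻)` map `𝔻̄`
into `𝔻̄` with Denjoy–Wolff point `z₀ ∈ ∂𝔻`, and suppose `φ` extends holomorphically to a
neighborhood of `z₀` with `φ(z₀) = z₀` and `|φ'(z₀)| < 1`. Then `C_φ : A(𝔻) → A(𝔻)` is
mean ergodic if and only if `φ^n(z) → z₀` for every `z ∈ 𝔻̄`. -/
theorem stmt_12 (φ : ℂ → ℂ) (hφa : IsDiscAlg φ)
    (hφm : MapsTo φ (closedBall (0:ℂ) 1) (closedBall (0:ℂ) 1))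
    (hφb : MapsTo φ (ball (0:ℂ) 1) (ball (0:ℂ) 1))
    (z₀ : ℂ) (hz₀ : ‖z₀‖ = 1)
    (hDW : TendstoLocallyUniformlyOn (fun (n : ℕ) (z : ℂ) => φ^[n] z) (fun _ => z₀)
      atTop (ball (0:ℂ) 1))
    (hfix : φ z₀ = z₀)
    (hext : ∃ r > (0:ℝ), ∃ ψ : ℂ → ℂ, DifferentiableOn ℂ ψ (ball z₀ r) ∧
      EqOn ψ φ (ball z₀ r ∩ closedBall (0:ℂ) 1) ∧ ψ z₀ = z₀ ∧ ‖deriv ψ z₀‖ < 1) :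
    MeanErgodicDiscAlg φ ↔
      ∀ z ∈ closedBall (0:ℂ) 1, Tendsto (fun n : ℕ => φ^[n] z) atTop (𝓝 z₀) :=
  stmt_12_general φ hφa hφm z₀ hz₀ hDW hext
end
end

section
/- Let v be a typical weight on 𝔻 and let λ ∈ ℂ with |λ| = 1 not be a root of unity. Consider the symbol φ(z) = λz. Then the composition operator C_φ is mean ergodic on H_v^0, and for every f ∈ H_v^0 the Cesàro means (C_φ)_[n] f converge in ‖·‖_v to the constant function f(0). -/
open Metric Set Filter Complex
open scoped Topology Classical

noncomputable section

/-! The Cesàro means of `f(λ^m z)` act on the Taylor coefficients of `f` by multiplying the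
`k`-th one by the Cesàro mean of `(λ^k)^m`, which tends to `0` for `k ≥ 1` because `λ` is not a
root of unity. Tannery's theorem turns this into uniform convergence to `f 0` on every disc
`|z| ≤ r < 1`; near the boundary, rotation invariance of `v` bounds the weighted means of
`f - f 0` by the small values of `v ‖f - f 0‖` there. -/

def cesaroMean (u : ℕ → ℂ) (n : ℕ) : ℂ :=
  (n : ℂ)⁻¹ * ∑ m ∈ Finset.Icc 1 n, u m

lemma cesaroMean_const_mul (c : ℂ) (u : ℕ → ℂ) (n : ℕ) :
    cesaroMean (fun m => c * u m) n = c * cesaroMean u n := by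
  simp only [cesaroMean, ← Finset.mul_sum]
  ring

lemma cesaroMean_sub (u w : ℕ → ℂ) (n : ℕ) :
    cesaroMean (fun m => u m - w m) n = cesaroMean u n - cesaroMean w n := by
  simp only [cesaroMean, Finset.sum_sub_distrib, mul_sub]

lemma cesaroMean_const (c : ℂ) {n : ℕ} (hn : n ≠ 0) : cesaroMean (fun _ => c) n = c := by
  have hn' : (n : ℂ) ≠ 0 := Nat.cast_ne_zero.2 hn
  simp only [cesaroMean, Finset.sum_const, Nat.card_Icc, Nat.add_sub_cancel, nsmul_eq_mul]
  field_simp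

lemma norm_cesaroMean_le {u : ℕ → ℂ} {n : ℕ} {B : ℝ} (hB : 0 ≤ B)
    (h : ∀ m ∈ Finset.Icc 1 n, ‖u m‖ ≤ B) : ‖cesaroMean u n‖ ≤ B := by
  rcases Nat.eq_zero_or_pos n with rfl | hn
  · simpa [cesaroMean] using hB
  have hn' : (0 : ℝ) < n := Nat.cast_pos.2 hn
  calc ‖cesaroMean u n‖ ≤ (n : ℝ)⁻¹ * ∑ m ∈ Finset.Icc 1 n, ‖u m‖ := by
        rw [cesaroMean, norm_mul, norm_inv, Complex.norm_natCast]
        gcongr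
        exact norm_sum_le _ _
    _ ≤ (n : ℝ)⁻¹ * ∑ m ∈ Finset.Icc 1 n, B := by gcongr with m hm; exact h m hm
    _ = B := by
        rw [Finset.sum_const, Nat.card_Icc, Nat.add_sub_cancel, nsmul_eq_mul]
        field_simp

lemma norm_cesaroMean_pow_le_one {x : ℂ} (hx : ‖x‖ ≤ 1) (n : ℕ) :
    ‖cesaroMean (x ^ ·) n‖ ≤ 1 :=
  norm_cesaroMean_le zero_le_one fun m _ => by rw [norm_pow]; exact pow_le_one₀ (norm_nonneg x) hx

lemma tendsto_cesaroMean_pow_zero {x : ℂ} (hx1 : ‖x‖ ≤ 1) (hx : x ≠ 1) :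
    Tendsto (cesaroMean (x ^ ·)) atTop (𝓝 0) := by
  have hd : 0 < ‖x - 1‖ := norm_pos_iff.2 (sub_ne_zero.2 hx)
  have hsum : ∀ n, ‖∑ m ∈ Finset.Icc 1 n, x ^ m‖ ≤ 2 / ‖x - 1‖ := by
    intro n
    have h := geom_sum_Ico_mul x (Nat.le_add_left 1 n)
    rw [Finset.Ico_add_one_right_eq_Icc, pow_one] at h
    rw [le_div_iff₀ hd, ← norm_mul, h]
    calc ‖x ^ (n + 1) - x‖ ≤ ‖x ^ (n + 1)‖ + ‖x‖ := norm_sub_le _ _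
      _ ≤ 1 + 1 := by gcongr; rw [norm_pow]; exact pow_le_one₀ (norm_nonneg x) hx1
      _ = 2 := by norm_num
  refine squeeze_zero_norm (fun n => ?_) (tendsto_const_div_atTop_nhds_zero_nat (2 / ‖x - 1‖))
  rw [cesaroMean, norm_mul, norm_inv, Complex.norm_natCast, inv_mul_eq_div]
  gcongr
  exact hsum n

lemma cesaro_rotation_eq (lam : ℂ) (f : ℂ → ℂ) (n : ℕ) (z : ℂ) :
    cesaro (fun w => lam * w) f n z = cesaroMean (fun m => f (lam ^ m * z)) n := by
  have hiter : ∀ m : ℕ, (fun w => lam * w)^[m] z = lam ^ m * z := by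
    intro m
    induction m with
    | zero => simp
    | succ k ih => rw [Function.iterate_succ_apply', ih, pow_succ', mul_assoc]
  simp only [cesaro, cesaroMean, hiter]

lemma hasSum_cesaroMean_rotation {f : ℂ → ℂ} {a : ℕ → ℂ} {lam z : ℂ}
    (h : ∀ m : ℕ, HasSum (fun k => a k * (lam ^ m * z) ^ k) (f (lam ^ m * z))) (n : ℕ) :
    HasSum (fun k => a k * z ^ k * cesaroMean (fun m => (lam ^ k) ^ m) n)
      (cesaroMean (fun m => f (lam ^ m * z)) n) := by
  have hterm : (fun k => a k * z ^ k * cesaroMean (fun m => (lam ^ k) ^ m) n) =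
      fun k => (n : ℂ)⁻¹ * ∑ m ∈ Finset.Icc 1 n, a k * (lam ^ m * z) ^ k := by
    funext k
    simp only [cesaroMean, Finset.mul_sum]
    refine Finset.sum_congr rfl fun m _ => ?_
    rw [mul_pow, ← pow_mul, ← pow_mul, Nat.mul_comm]
    ring
  rw [hterm]
  exact (hasSum_sum fun m _ => h m).mul_left _

lemma HasFPowerSeriesOnBall.norm_cesaro_rotation_sub_le {f : ℂ → ℂ}
    {p : FormalMultilinearSeries ℂ ℂ ℂ} {s r : NNReal} (hp : HasFPowerSeriesOnBall f p 0 s)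
    (hrs : r < s) {lam z : ℂ} (hlam : ‖lam‖ = 1) (hz : ‖z‖ ≤ r) {n : ℕ} (hn : n ≠ 0) :
    ‖cesaro (fun w => lam * w) f n z - f 0‖ ≤
      ∑' k, ‖p (k + 1)‖ * r ^ (k + 1) * ‖cesaroMean ((lam ^ (k + 1)) ^ ·) n‖ := by
  have hsum : Summable fun k => ‖p (k + 1)‖ * r ^ (k + 1) *
      ‖cesaroMean ((lam ^ (k + 1)) ^ ·) n‖ :=
    ((summable_nat_add_iff 1).2 (p.summable_norm_mul_pow
      (lt_of_lt_of_le (by exact_mod_cast hrs) hp.r_le))).of_nonneg_of_le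
      (fun k => by positivity) fun k => mul_le_of_le_one_right (by positivity)
        (norm_cesaroMean_pow_le_one (by simp [hlam]) n)
  have htaylor : ∀ m : ℕ, HasSum (fun k => p.coeff k * (lam ^ m * z) ^ k) (f (lam ^ m * z)) := by
    intro m
    have hmem : lam ^ m * z ∈ Metric.eball (0 : ℂ) s := by
      rw [mem_eball_zero_iff, enorm_eq_nnnorm, ENNReal.coe_lt_coe, ← NNReal.coe_lt_coe,
        coe_nnnorm, norm_mul, norm_pow, hlam, one_pow, one_mul]
      exact hz.trans_lt (by exact_mod_cast hrs)
    simpa [FormalMultilinearSeries.apply_eq_pow_smul_coeff, mul_comm] using hp.hasSum hmem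
  have hseries := (hasSum_nat_add_iff' 1).2 (hasSum_cesaroMean_rotation htaylor n)
  rw [← cesaro_rotation_eq] at hseries
  simp only [Finset.range_one, Finset.sum_singleton, pow_zero, one_pow, mul_one,
    cesaroMean_const 1 hn] at hseries
  rw [show p.coeff 0 = f 0 from hp.coeff_zero 1] at hseries
  refine hseries.norm_le_of_bounded hsum.hasSum fun k => ?_
  rw [norm_mul, norm_mul, norm_pow, ← p.norm_apply_eq_norm_coef]
  gcongr

lemma tendstoUniformlyOn_cesaro_rotation {f : ℂ → ℂ} (hf : DifferentiableOn ℂ f (ball 0 1))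
    {lam : ℂ} (hlam : ‖lam‖ = 1) (hnotroot : ∀ j : ℕ, 0 < j → lam ^ j ≠ 1)
    {r : NNReal} (hr : r < 1) :
    TendstoUniformlyOn (cesaro (fun w => lam * w) f) (fun _ => f 0) atTop
      (closedBall 0 r) := by
  obtain ⟨s, hrs, hs1⟩ := exists_between hr
  have hp : HasFPowerSeriesOnBall f (cauchyPowerSeries f 0 s) 0 s :=
    (hf.mono (closedBall_subset_ball (by exact_mod_cast hs1))).hasFPowerSeriesOnBall
      (zero_le.trans_lt hrs)
  set p := cauchyPowerSeries f 0 s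
  have hlim : Tendsto (fun n => ∑' k, ‖p (k + 1)‖ * r ^ (k + 1) *
      ‖cesaroMean ((lam ^ (k + 1)) ^ ·) n‖) atTop (𝓝 0) := by
    simpa using tendsto_tsum_of_dominated_convergence (g := fun _ => 0)
      (f := fun n k => ‖p (k + 1)‖ * r ^ (k + 1) * ‖cesaroMean ((lam ^ (k + 1)) ^ ·) n‖)
      ((summable_nat_add_iff 1).2 (p.summable_norm_mul_pow
        (lt_of_lt_of_le (by exact_mod_cast hrs) hp.r_le)))
      (fun k => by
        simpa using (tendsto_cesaroMean_pow_zero (by simp [hlam])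
          (hnotroot _ k.succ_pos)).norm.const_mul (‖p (k + 1)‖ * r ^ (k + 1)))
      (Eventually.of_forall fun n k => by
        rw [Real.norm_of_nonneg (by positivity)]
        exact mul_le_of_le_one_right (by positivity)
          (norm_cesaroMean_pow_le_one (by simp [hlam]) n))
  rw [Metric.tendstoUniformlyOn_iff]
  intro ε hε
  filter_upwards [hlim.eventually (gt_mem_nhds hε), eventually_ne_atTop 0] with n hn hn0 z hz
  rw [dist_comm, dist_eq_norm]
  exact (hp.norm_cesaro_rotation_sub_le hrs hlam (mem_closedBall_zero_iff.1 hz) hn0).trans_lt hn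

lemma mul_norm_cesaro_rotation_sub_le {f : ℂ → ℂ} {lam z a : ℂ} {t ε : ℝ} {n : ℕ}
    (hlam : ‖lam‖ = 1) (hn : n ≠ 0) (ht : 0 ≤ t)
    (h : ∀ w : ℂ, ‖w‖ = ‖z‖ → t * ‖f w - a‖ ≤ ε) :
    t * ‖cesaro (fun w => lam * w) f n z - a‖ ≤ ε := by
  have hε : 0 ≤ ε := (mul_nonneg ht (norm_nonneg _)).trans (h z rfl)
  rw [cesaro_rotation_eq, ← cesaroMean_const a hn, ← cesaroMean_sub, ← Real.norm_of_nonneg ht,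
    ← Complex.norm_real, ← norm_mul, ← cesaroMean_const_mul]
  refine norm_cesaroMean_le hε fun m _ => ?_
  rw [norm_mul, Complex.norm_real, Real.norm_of_nonneg ht]
  exact h _ (by rw [norm_mul, norm_pow, hlam, one_pow, one_mul])

lemma IsHv0.exists_radius_weight_mul_norm_sub_lt {v : ℂ → ℝ} {f : ℂ → ℂ} (hf : IsHv0 v f)
    (hv : IsTypicalWeight v) (c : ℂ) {ε : ℝ} (hε : 0 < ε) :
    ∃ r : ℝ, r < 1 ∧ ∀ z ∈ ball (0 : ℂ) 1, r ≤ ‖z‖ → v z * ‖f z - c‖ < ε := by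
  obtain ⟨r₁, hr₁, hf_small⟩ := hf.2 (ε / 2) (half_pos hε)
  obtain ⟨r₂, hr₂, hv_small⟩ := hv.2.2.2.2.2 (ε / 2 / (‖c‖ + 1)) (by positivity)
  refine ⟨max r₁ r₂, max_lt hr₁ hr₂, fun z hz hrz => ?_⟩
  have hvz : 0 ≤ v z := (hv.2.1 z hz).le
  have hvc : v z * ‖c‖ < ε / 2 := by
    have := hv_small z hz (le_of_max_le_right hrz)
    rw [lt_div_iff₀ (by positivity)] at this
    nlinarith
  calc v z * ‖f z - c‖ ≤ v z * ‖f z‖ + v z * ‖c‖ := by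
        rw [← mul_add]; gcongr; exact norm_sub_le _ _
    _ < ε / 2 + ε / 2 := add_lt_add (hf_small z hz (le_of_max_le_left hrz)) hvc
    _ = ε := add_halves ε

/-- **Rotation symbol on `H_v^0`, irrational case.** Let `v` be a typical weight and `λ` with
`|λ| = 1` not a root of unity. Then for `φ(z) = λz` the composition operator `C_φ` is mean
ergodic on `H_v^0`: for every `f ∈ H_v^0` its Cesàro means converge in `‖·‖_v` to the
constant function `f(0)`. -/
theorem stmt_18 (v : ℂ → ℝ) (hv : IsTypicalWeight v)
    (lam : ℂ) (hlam : ‖lam‖ = 1) (hnotroot : ∀ j : ℕ, 0 < j → lam ^ j ≠ 1) :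
    ∀ f : ℂ → ℂ, IsHv0 v f → ∀ ε > (0:ℝ), ∃ N : ℕ, ∀ n ≥ N, ∀ z ∈ ball (0:ℂ) 1,
      v z * ‖cesaro (fun w => lam * w) f n z - f 0‖ ≤ ε := by
  intro f hf ε hε
  obtain ⟨-, hvpos, ⟨M, hM⟩, hrad, -, -⟩ := id hv
  have hM0 : 0 ≤ M := (hvpos 0 (mem_ball_self one_pos)).le.trans (hM 0 (mem_ball_self one_pos))
  obtain ⟨r, hr1, hr⟩ := hf.exists_radius_weight_mul_norm_sub_lt hv (f 0) hε
  have hunif := tendstoUniformlyOn_cesaro_rotation hf.1.1 hlam hnotroot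
    (Real.toNNReal_lt_one.2 hr1)
  obtain ⟨N, hN⟩ := eventually_atTop.1 <|
    (Metric.tendstoUniformlyOn_iff.1 hunif (ε / (M + 1)) (by positivity)).and
      (eventually_ne_atTop 0)
  refine ⟨N, fun n hn z hz => ?_⟩
  obtain ⟨hclose, hn0⟩ := hN n hn
  rcases le_or_gt ‖z‖ r with hzr | hrz
  · have hdist := hclose z (mem_closedBall_zero_iff.2 (hzr.trans (Real.le_coe_toNNReal r)))
    rw [dist_comm, dist_eq_norm] at hdist
    calc v z * ‖cesaro (fun w => lam * w) f n z - f 0‖ ≤ M * (ε / (M + 1)) :=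
          mul_le_mul (hM z hz) hdist.le (norm_nonneg _) hM0
      _ ≤ ε := by rw [← mul_div_assoc, div_le_iff₀ (by positivity)]; nlinarith
  · refine mul_norm_cesaro_rotation_sub_le hlam hn0 (hvpos z hz).le fun w hw => ?_
    have hw_ball : w ∈ ball (0 : ℂ) 1 := by rwa [mem_ball_zero_iff, hw, ← mem_ball_zero_iff]
    rw [hrad z hz w hw_ball hw.symm]
    exact (hr w hw_ball (hw ▸ hrz.le)).le
end
end
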